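/- For nonnegative integer n, positive integer a, and real x, the generalized Bernoulli polynomial satisfies B_n^a(-x) = \sum_{k=0}^{n} (-1)^k * k! * B_{n,k}(\lambda_1, ..., \lambda_{n-k+1}), where \lambda_m = \sum_{l=0}^{m} S(l+a,a) * x^{m-l} * C(m,l) * C(l+a,a)^{-1}. -/

import Mathlib

/-!
Put `h = ((e^t - 1)/t)^a e^{xt}`. Since `t^a ((e^t - 1)/t)^a = (e^t - 1)^a` is the exponential
generating function of `a! S(m, a)`, the convolution with `e^{xt}` shows that `h` is the exponential
generating function of the `λ_m`, and `e^{-xt} = (e^{xt})⁻¹` makes `h⁻¹` the generating function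
of `B_n^a(-x)`. As `λ_0 = 1`, `h⁻¹ = (1 + (h - 1))⁻¹ = ∑_k (-1)^k (h - 1)^k`, where only `k ≤ n`
reaches `t^n`, and by the multinomial theorem `n!` times the `t^n`-coefficient of `(h - 1)^k` is
`k! B_{n,k}(λ_1, λ_2, …)`.
-/

open Finset PowerSeries

/-- Stirling numbers of the second kind. -/
def stirling2 : ℕ → ℕ → ℕ
  | 0, 0 => 1
  | 0, _ + 1 => 0
  | _ + 1, 0 => 0
  | n + 1, k + 1 => (k + 1) * stirling2 n (k + 1) + stirling2 n k

/-- Partial Bell polynomial `B_{n,k}(x 1, x 2, ...)`, summing over sequences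
`ℓ` of nonnegative integers with `∑ i * ℓ i = n` and `∑ ℓ i = k`. -/
noncomputable def bellPoly (n k : ℕ) (x : ℕ → ℝ) : ℝ :=
  ∑ ℓ ∈ (Fintype.piFinset fun _ : Fin n => Finset.range (n + 1)).filter
      (fun ℓ => (∑ i, (i.1 + 1) * ℓ i) = n ∧ (∑ i, ℓ i) = k),
    ((n.factorial : ℝ) / ∏ i, ((ℓ i).factorial : ℝ)) *
      ∏ i, (x (i.1 + 1) / ((i.1 + 1).factorial : ℝ)) ^ (ℓ i)

/-- The power series `(e^t - 1)/t`, with constant term `1`. -/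
noncomputable def expm1DivT : PowerSeries ℝ :=
  PowerSeries.mk fun n => 1 / ((n + 1).factorial : ℝ)

/-- The power series `e^{x t}`. -/
noncomputable def expSeries (x : ℝ) : PowerSeries ℝ :=
  PowerSeries.mk fun n => x ^ n / (n.factorial : ℝ)

/-- The generalized Bernoulli polynomial value `B_n^a(-x)`, defined via the
exponential generating function `(t/(e^t-1))^a e^{-x t}`. -/
noncomputable def genBernoulliNeg (a : ℕ) (x : ℝ) (n : ℕ) : ℝ :=
  (n.factorial : ℝ) * PowerSeries.coeff n ((expm1DivT ^ a)⁻¹ * expSeries (-x))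

theorem stirling2_eq_stirlingSecond : stirling2 = Nat.stirlingSecond := by
  funext n k
  induction n generalizing k with
  | zero => cases k <;> rfl
  | succ n ih =>
    cases k with
    | zero => rfl
    | succ k => rw [stirling2, Nat.stirlingSecond_succ_succ, ih, ih]

namespace PowerSeries

theorem coeff_exp_sub_one_pow {K : Type*} [Field K] [CharZero K] (a m : ℕ) :
    coeff m ((exp K - 1) ^ a) = (a.factorial : K) * Nat.stirlingSecond m a / m.factorial := by
  induction m generalizing a with
  | zero =>
    rw [coeff_zero_eq_constantCoeff_apply, map_pow, map_sub, constantCoeff_exp, map_one, sub_self]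
    cases a <;> simp
  | succ m ih =>
    cases a with
    | zero => simp
    | succ a =>
      -- `y = (e^t - 1)^(a+1)` satisfies `y' = (a + 1) (y + (e^t - 1)^a)`: the Stirling recurrence.
      have hderiv : d⁄dX K ((exp K - 1) ^ (a + 1))
          = (a + 1 : K) • ((exp K - 1) ^ (a + 1) + (exp K - 1) ^ a) := by
        rw [derivative_pow, map_sub, derivative_exp, derivative_one, sub_zero, Algebra.smul_def]
        simp only [Nat.add_sub_cancel, map_add, map_natCast, map_one, Nat.cast_add, Nat.cast_one]
        ring
      have hcoeff := coeff_derivative ((exp K - 1) ^ (a + 1)) m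
      rw [hderiv, coeff_smul, map_add, ih, ih, smul_eq_mul] at hcoeff
      have hm : (m.factorial : K) ≠ 0 := Nat.cast_ne_zero.mpr m.factorial_ne_zero
      rw [eq_div_iff (Nat.cast_ne_zero.mpr (m + 1).factorial_ne_zero)]
      push_cast [Nat.stirlingSecond_succ_succ, Nat.factorial_succ] at hcoeff ⊢
      field_simp at hcoeff
      linear_combination -hcoeff

theorem coeff_inv_one_add {K : Type*} [Field K] {g : K⟦X⟧} (hg : constantCoeff g = 0) (n : ℕ) :
    coeff n (1 + g)⁻¹ = ∑ j ∈ range (n + 1), (-1) ^ j * coeff n (g ^ j) := by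
  set S := ∑ j ∈ range (n + 1), (-g) ^ j
  have hunit : constantCoeff (1 + g) ≠ 0 := by simp [hg]
  have hgeom : (1 + g) * S = 1 - (-g) ^ (n + 1) := by
    simpa using mul_neg_geom_sum (-g) (n + 1)
  have hinv : (1 + g)⁻¹ = S + (1 + g)⁻¹ * (-g) ^ (n + 1) := by
    calc (1 + g)⁻¹ = (1 + g)⁻¹ * ((1 + g) * S + (-g) ^ (n + 1)) := by
          rw [hgeom, sub_add_cancel, mul_one]
      _ = S + (1 + g)⁻¹ * (-g) ^ (n + 1) := by
          rw [mul_add, ← mul_assoc, PowerSeries.inv_mul_cancel _ hunit, one_mul]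
  have htail : coeff n ((1 + g)⁻¹ * (-g) ^ (n + 1)) = 0 := by
    refine X_pow_dvd_iff.mp (Dvd.dvd.mul_left (pow_dvd_pow_of_dvd ?_ _) _) n n.lt_succ_self
    exact X_dvd_iff.mpr (by simp [hg])
  rw [hinv, map_add, htail, add_zero, map_sum]
  refine sum_congr rfl fun j _ => ?_
  rw [neg_pow, ← map_one (C (R := K)), ← map_neg, ← map_pow, coeff_C_mul]

theorem coeff_pow_eq_of_X_pow_dvd_sub {R : Type*} [CommRing R] {f g : R⟦X⟧} {n : ℕ}
    (h : X ^ (n + 1) ∣ f - g) (k : ℕ) : coeff n (f ^ k) = coeff n (g ^ k) := by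
  rw [← sub_eq_zero, ← map_sub]
  exact X_pow_dvd_iff.mp (h.trans (sub_dvd_pow_sub_pow f g k)) n n.lt_succ_self

theorem coeff_sum_C_mul_X_pow_pow {R ι : Type*} [CommSemiring R] [DecidableEq ι] (s : Finset ι)
    (c : ι → R) (e : ι → ℕ) (n k : ℕ) :
    coeff n ((∑ i ∈ s, C (c i) * X ^ e i) ^ k) =
      ∑ κ ∈ (piAntidiag s k).filter (fun κ => ∑ i ∈ s, e i * κ i = n),
        (Nat.multinomial s κ : R) * ∏ i ∈ s, c i ^ κ i := by
  rw [sum_pow_eq_sum_piAntidiag, map_sum, sum_filter]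
  refine sum_congr rfl fun κ _ => ?_
  have hmonomial : (Nat.multinomial s κ : R⟦X⟧) * ∏ i ∈ s, (C (c i) * X ^ e i) ^ κ i
      = C ((Nat.multinomial s κ : R) * ∏ i ∈ s, c i ^ κ i) * X ^ (∑ i ∈ s, e i * κ i) := by
    simp only [mul_pow, prod_mul_distrib, ← pow_mul, prod_pow_eq_pow_sum, map_mul, map_prod,
      map_pow, map_natCast, mul_assoc]
  rw [hmonomial, coeff_C_mul_X_pow]
  simp only [eq_comm]

end PowerSeries

theorem filter_piAntidiag_eq_filter_piFinset (n k : ℕ) :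
    (piAntidiag (univ : Finset (Fin n)) k).filter (fun κ => ∑ i, (i.1 + 1) * κ i = n) =
      (Fintype.piFinset fun _ : Fin n => range (n + 1)).filter
        (fun ℓ => ∑ i, (i.1 + 1) * ℓ i = n ∧ ∑ i, ℓ i = k) := by
  ext κ
  simp only [mem_filter, mem_piAntidiag, Fintype.mem_piFinset, mem_range, mem_univ,
    implies_true, and_true]
  constructor
  · rintro ⟨hk, hn⟩
    refine ⟨fun i => ?_, hn, hk⟩
    have : (i.1 + 1) * κ i ≤ ∑ j, (j.1 + 1) * κ j :=
      single_le_sum (f := fun j : Fin n => (j.1 + 1) * κ j) (by simp) (mem_univ i)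
    nlinarith
  · rintro ⟨-, hn, hk⟩
    exact ⟨hk, hn⟩

theorem factorial_mul_coeff_pow_eq_factorial_mul_bellPoly (n k : ℕ) (x : ℕ → ℝ) {g : ℝ⟦X⟧}
    (hg0 : constantCoeff g = 0) (hg : ∀ j, 0 < j → j ≤ n → coeff j g = x j / j.factorial) :
    n.factorial * coeff n (g ^ k) = k.factorial * bellPoly n k x := by
  classical
  set p : ℝ⟦X⟧ := ∑ i : Fin n, C (x (i.1 + 1) / (i.1 + 1).factorial) * X ^ (i.1 + 1)
  have htrunc : X ^ (n + 1) ∣ g - p := by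
    refine X_pow_dvd_iff.mpr fun j hj => ?_
    rw [map_sub, sub_eq_zero]
    rcases Nat.eq_zero_or_pos j with rfl | hj0
    · simp [p, hg0]
    · simp only [p, map_sum, coeff_C_mul_X_pow, hg j hj0 (by omega)]
      rw [Fin.sum_univ_eq_sum_range
        (fun i => if j = i + 1 then x (i + 1) / (i + 1).factorial else 0), sum_eq_single (j - 1)]
        <;> grind
  rw [coeff_pow_eq_of_X_pow_dvd_sub htrunc, coeff_sum_C_mul_X_pow_pow,
    filter_piAntidiag_eq_filter_piFinset, bellPoly, mul_sum, mul_sum]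
  refine sum_congr rfl fun ℓ hℓ => ?_
  have hk : ∑ i, ℓ i = k := (mem_filter.mp hℓ).2.2
  have hmultinomial : (Nat.multinomial univ ℓ : ℝ) = k.factorial / ∏ i, ((ℓ i).factorial : ℝ) := by
    rw [eq_div_iff (by positivity), ← hk]
    exact_mod_cast (mul_comm _ _).trans (Nat.multinomial_spec _ _)
  rw [hmultinomial]
  ring

theorem expSeries_eq_rescale_exp (x : ℝ) : expSeries x = rescale x (exp ℝ) := by
  ext m
  simp [expSeries, coeff_rescale, div_eq_mul_inv]

theorem X_mul_expm1DivT : X * expm1DivT = exp ℝ - 1 := by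
  ext m
  cases m with
  | zero => simp
  | succ m => simp [coeff_succ_X_mul, expm1DivT]

theorem constantCoeff_expm1DivT : constantCoeff expm1DivT = 1 := by
  simp [expm1DivT, ← coeff_zero_eq_constantCoeff_apply]

theorem constantCoeff_expSeries (x : ℝ) : constantCoeff (expSeries x) = 1 := by
  simp [expSeries, ← coeff_zero_eq_constantCoeff_apply]

theorem coeff_expm1DivT_pow (a l : ℕ) :
    coeff l (expm1DivT ^ a) = a.factorial * stirling2 (l + a) a / (l + a).factorial := by
  rw [← coeff_X_pow_mul, ← mul_pow, X_mul_expm1DivT, coeff_exp_sub_one_pow,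
    stirling2_eq_stirlingSecond]

theorem coeff_expm1DivT_pow_mul_expSeries (a : ℕ) (x : ℝ) (m : ℕ) :
    coeff m (expm1DivT ^ a * expSeries x) =
      (∑ l ∈ range (m + 1), (stirling2 (l + a) a : ℝ) * x ^ (m - l) * (m.choose l : ℝ) *
        ((l + a).choose a : ℝ)⁻¹) / m.factorial := by
  rw [coeff_mul, Nat.sum_antidiagonal_eq_sum_range_succ_mk, sum_div]
  refine sum_congr rfl fun l hl => ?_
  have hlm : l ≤ m := Nat.lt_succ_iff.mp (mem_range.mp hl)
  rw [coeff_expm1DivT_pow, expSeries, coeff_mk, Nat.cast_choose ℝ hlm,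
    Nat.cast_choose ℝ (Nat.le_add_left a l), Nat.add_sub_cancel]
  field_simp

theorem inv_expSeries (x : ℝ) : (expSeries x)⁻¹ = expSeries (-x) := by
  rw [inv_eq_iff_mul_eq_one (by simp [constantCoeff_expSeries]), expSeries_eq_rescale_exp,
    expSeries_eq_rescale_exp, exp_mul_exp_eq_exp_add, neg_add_cancel]
  simp

theorem inv_expm1DivT_pow_mul_expSeries_neg (a : ℕ) (x : ℝ) :
    (expm1DivT ^ a)⁻¹ * expSeries (-x) = (expm1DivT ^ a * expSeries x)⁻¹ := by
  rw [PowerSeries.mul_inv_rev, inv_expSeries, mul_comm]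

theorem genBernoulli_closed_form_general (n a : ℕ) (x : ℝ) :
    genBernoulliNeg a x n =
      ∑ k ∈ Finset.range (n + 1),
        (-1 : ℝ) ^ k * (k.factorial : ℝ) *
          bellPoly n k (fun m => ∑ l ∈ Finset.range (m + 1),
            (stirling2 (l + a) a : ℝ) * x ^ (m - l) * (m.choose l : ℝ) *
              ((l + a).choose a : ℝ)⁻¹) := by
  rw [genBernoulliNeg, inv_expm1DivT_pow_mul_expSeries_neg]
  set h := expm1DivT ^ a * expSeries x
  have hconst : constantCoeff (h - 1) = 0 := by
    simp [h, constantCoeff_expm1DivT, constantCoeff_expSeries]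
  rw [← add_sub_cancel 1 h, coeff_inv_one_add hconst, mul_sum]
  refine sum_congr rfl fun k _ => ?_
  rw [mul_left_comm,
    factorial_mul_coeff_pow_eq_factorial_mul_bellPoly n k _ hconst fun j hj _ => ?_]
  · ring
  · rw [map_sub, coeff_one, if_neg hj.ne', sub_zero, coeff_expm1DivT_pow_mul_expSeries]

/-- Closed form for the generalized Bernoulli polynomial `B_n^a(-x)` in terms of
partial Bell polynomials and Stirling numbers of the second kind. -/
theorem genBernoulli_closed_form (n a : ℕ) (ha : 0 < a) (x : ℝ) :
    genBernoulliNeg a x n =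
      ∑ k ∈ Finset.range (n + 1),
        (-1 : ℝ) ^ k * (k.factorial : ℝ) *
          bellPoly n k (fun m => ∑ l ∈ Finset.range (m + 1),
            (stirling2 (l + a) a : ℝ) * x ^ (m - l) * (m.choose l : ℝ) *
              ((l + a).choose a : ℝ)⁻¹) :=
  genBernoulli_closed_form_general n a x
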